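/- arXiv:1405.1303 — 2 statements merged into one kernel-verified Lean document; each statement's English description precedes it below -/
import Mathlib

section
/- Fix δ ∈ (0,1) and 0 ≤ θ < π/2 - 2 arcsin δ. Suppose that for any two n × n complex matrices A, B with all entries in the disc {w : |w - 1| ≤ δ} that differ in exactly one column, both per A and per B are non-zero and the angle between per A and per B is at most θ. Then for any (n+1) × (n+1) complex matrix Z with |z_ij - 1| ≤ δ for all i,j, one has |per Z| ≥ τ Σ_{j=1}^{n+1} |z_{1j}| |per Z_j|, where τ = sqrt(cos(θ + 2 arcsin δ)) and Z_j is obtained from Z by deleting the first row and j-th column. Assume additionally that per W ≠ 0 for every n × n matrix W with entries in the disc. -/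
/-- The permanent of a square matrix. -/
noncomputable def perm {n : ℕ} (A : Matrix (Fin n) (Fin n) ℂ) : ℂ :=
  ∑ σ : Equiv.Perm (Fin n), ∏ i, A i (σ i)

/-!
Expanding along the first row, `per Z = ∑ j, u j` with `u j = z₀ⱼ * per Zⱼ`. Two minors `Zⱼ`, `Zₖ`
are, up to a column permutation, `n × n` matrices differing in one column, so the hypothesis bounds
the angle between `per Zⱼ` and `per Zₖ` by `θ`, and the factors `z₀ⱼ`, lying in the disc
`|w - 1| ≤ δ`, add at most `2 arcsin δ`. Vectors with pairwise angles at most `α ≤ π` satisfy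
`‖∑ u‖² = ∑ⱼₖ ⟪uⱼ, uₖ⟫ ≥ cos α (∑ ‖u‖)²`.
-/

open Function InnerProductGeometry Real
open Equiv (swap Perm)

section InnerProductSpace

variable {E : Type*} [NormedAddCommGroup E] [InnerProductSpace ℝ E]

theorem cos_mul_norm_mul_norm_le_inner {x y : E} {α : ℝ} (h : angle x y ≤ α) (hα : α ≤ π) :
    cos α * (‖x‖ * ‖y‖) ≤ inner ℝ x y := by
  rw [← cos_angle_mul_norm_mul_norm]
  gcongr
  exact cos_le_cos_of_nonneg_of_le_pi (angle_nonneg x y) hα h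

theorem sqrt_cos_mul_sum_norm_le_norm_sum {ι : Type*} [Fintype ι] {u : ι → E} {α : ℝ}
    (hα : α ≤ π) (hu : Pairwise fun i j => angle (u i) (u j) ≤ α) :
    √(cos α) * ∑ i, ‖u i‖ ≤ ‖∑ i, u i‖ := by
  have hsq : cos α * (∑ i, ‖u i‖) ^ 2 ≤ ‖∑ i, u i‖ ^ 2 := by
    rw [← real_inner_self_eq_norm_sq, sq, sum_inner, Finset.sum_mul_sum, Finset.mul_sum]
    refine Finset.sum_le_sum fun i _ => ?_
    rw [inner_sum, Finset.mul_sum]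
    refine Finset.sum_le_sum fun j _ => ?_
    rcases eq_or_ne i j with rfl | hij
    · rw [real_inner_self_eq_norm_mul_norm]
      exact mul_le_of_le_one_left (by positivity) (cos_le_one α)
    · exact cos_mul_norm_mul_norm_le_inner (hu hij) hα
  calc √(cos α) * ∑ i, ‖u i‖ = √(cos α * (∑ i, ‖u i‖) ^ 2) := by
        rw [sqrt_mul' _ (sq_nonneg _), sqrt_sq (by positivity)]
    _ ≤ √(‖∑ i, u i‖ ^ 2) := sqrt_le_sqrt hsq
    _ = ‖∑ i, u i‖ := sqrt_sq (norm_nonneg _)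

end InnerProductSpace

namespace Complex

theorem ne_zero_of_norm_sub_one_lt {z : ℂ} (hz : ‖z - 1‖ < 1) : z ≠ 0 := by
  rintro rfl
  simp at hz

theorem abs_arg_le_arcsin_of_norm_sub_one_le {z : ℂ} {δ : ℝ} (hδ : δ < 1) (hz : ‖z - 1‖ ≤ δ) :
    |arg z| ≤ arcsin δ := by
  have hδ0 : 0 ≤ δ := (norm_nonneg _).trans hz
  have hre : 0 ≤ z.re := by
    have := (abs_le.mp ((abs_re_le_norm (z - 1)).trans hz)).1
    simp only [sub_re, one_re] at this
    linarith
  have hnorm : 0 < ‖z‖ := norm_pos_iff.mpr (ne_zero_of_norm_sub_one_lt (hz.trans_lt hδ))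
  have hdisc : (z.re - 1) ^ 2 + z.im ^ 2 ≤ δ ^ 2 := by
    have := pow_le_pow_left₀ (norm_nonneg _) hz 2
    rwa [Complex.sq_norm, normSq_apply, sub_re, sub_im, one_re, one_im, sub_zero, ← sq, ← sq]
      at this
  have him : |z.im / ‖z‖| ≤ δ := by
    rw [abs_div, abs_norm, div_le_iff₀ hnorm]
    refine abs_le_of_sq_le_sq ?_ (by positivity)
    rw [mul_pow, Complex.sq_norm, normSq_apply]
    have hδ2 : 0 ≤ 1 - δ ^ 2 := by nlinarith
    nlinarith [mul_le_mul_of_nonneg_left hdisc hδ2, sq_nonneg (z.re - (1 - δ ^ 2))]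
  rw [arg_of_re_nonneg hre, abs_le]
  obtain ⟨hlo, hhi⟩ := abs_le.mp him
  exact ⟨by simpa only [arcsin_neg] using monotone_arcsin hlo, monotone_arcsin hhi⟩

theorem angle_mul_mul_le_angle_add_angle {z w p q : ℂ} (hz : z ≠ 0) (hq : q ≠ 0) :
    angle (z * p) (w * q) ≤ angle z w + angle p q :=
  calc angle (z * p) (w * q) ≤ angle (z * p) (z * q) + angle (z * q) (w * q) :=
        angle_le_angle_add_angle _ _ _
    _ = angle z w + angle p q := by rw [angle_mul_left hz, angle_mul_right hq, add_comm]

end Complex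

theorem Fin.exists_perm_eq_succAbove_comp {n : ℕ} {f : Fin n → Fin (n + 1)} (hf : Injective f)
    {c : Fin (n + 1)} (hc : ∀ l, f l ≠ c) : ∃ σ : Perm (Fin n), f = c.succAbove ∘ σ := by
  choose g hg using fun l => Fin.exists_succAbove_eq (hc l)
  have hg_inj : Injective g := fun a b hab => hf (by rw [← hg a, ← hg b, hab])
  exact ⟨Equiv.ofBijective g (Finite.injective_iff_bijective.mp hg_inj),
    funext fun l => (hg l).symm⟩

theorem Fin.exists_swap_succAbove_eq {n : ℕ} {j k : Fin (n + 1)} (hjk : j ≠ k) :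
    ∃ m : Fin n, ∀ l, l ≠ m → swap j k (j.succAbove l) = j.succAbove l := by
  obtain ⟨m, hm⟩ := Fin.exists_succAbove_eq hjk.symm
  refine ⟨m, fun l hl => Equiv.swap_apply_of_ne_of_ne (Fin.succAbove_ne j l) ?_⟩
  rw [← hm]
  exact Fin.succAbove_right_injective.ne hl

section Permanent

variable {m n : ℕ}

-- Mathlib's `permanent` reads `M (σ i) i`, so `perm A` is definitionally `Aᵀ.permanent`.
theorem perm_eq_permanent (A : Matrix (Fin n) (Fin n) ℂ) : perm A = A.permanent :=
  Matrix.permanent_transpose A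

theorem perm_submatrix_id_perm (A : Matrix (Fin n) (Fin n) ℂ) (σ : Perm (Fin n)) :
    perm (A.submatrix id σ) = perm A := by
  simp only [perm_eq_permanent, Matrix.permanent_permute_rows]

theorem perm_submatrix_eq_of_injective (M : Matrix (Fin m) (Fin (n + 1)) ℂ) (r : Fin n → Fin m)
    {f : Fin n → Fin (n + 1)} (hf : Injective f) {c : Fin (n + 1)} (hc : ∀ l, f l ≠ c) :
    perm (M.submatrix r f) = perm (M.submatrix r c.succAbove) := by
  obtain ⟨σ, rfl⟩ := Fin.exists_perm_eq_succAbove_comp hf hc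
  exact perm_submatrix_id_perm (M.submatrix r c.succAbove) σ

theorem perm_submatrix_swap_comp_succAbove (M : Matrix (Fin m) (Fin (n + 1)) ℂ)
    (r : Fin n → Fin m) (j k : Fin (n + 1)) :
    perm (M.submatrix r (swap j k ∘ j.succAbove)) = perm (M.submatrix r k.succAbove) := by
  refine perm_submatrix_eq_of_injective M r ((swap j k).injective.comp
    Fin.succAbove_right_injective) fun l h => Fin.succAbove_ne j l ?_
  rwa [comp_apply, Equiv.swap_apply_eq_iff, Equiv.swap_apply_right] at h

theorem perm_succ_row_zero (Z : Matrix (Fin (n + 1)) (Fin (n + 1)) ℂ) :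
    perm Z = ∑ j, Z 0 j * perm (Z.submatrix Fin.succ j.succAbove) := by
  rw [perm, ← Equiv.sum_comp Perm.decomposeFin.symm, Fintype.sum_prod_type]
  refine Finset.sum_congr rfl fun p _ => ?_
  have hf : Injective (swap 0 p ∘ Fin.succ) := (swap 0 p).injective.comp (Fin.succ_injective n)
  have hp : ∀ l, (swap 0 p ∘ Fin.succ) l ≠ p := fun l h => Fin.succ_ne_zero l <| by
    rwa [comp_apply, Equiv.swap_apply_eq_iff, Equiv.swap_apply_right] at h
  rw [← perm_submatrix_eq_of_injective Z Fin.succ hf hp, perm, Finset.mul_sum]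
  refine Finset.sum_congr rfl fun τ _ => ?_
  simp [Fin.prod_univ_succ, Perm.decomposeFin_symm_apply_zero, Perm.decomposeFin_symm_apply_succ]

end Permanent

theorem perm_lower_bound_of_angle_hypothesis_general (n : ℕ) (δ θ : ℝ)
    (hδ1 : δ < 1)
    (hθ : θ < Real.pi / 2 - 2 * Real.arcsin δ)
    (Hangle : ∀ A B : Matrix (Fin n) (Fin n) ℂ,
      (∀ i j, ‖A i j - 1‖ ≤ δ) →
      (∀ i j, ‖B i j - 1‖ ≤ δ) →
      (∃ j₀ : Fin n, ∀ j, j ≠ j₀ → ∀ i, A i j = B i j) →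
        perm A ≠ 0 ∧ perm B ≠ 0 ∧ |Complex.arg (perm A / perm B)| ≤ θ)
    (Z : Matrix (Fin (n + 1)) (Fin (n + 1)) ℂ)
    (hZ : ∀ i j, ‖Z i j - 1‖ ≤ δ) :
    ‖perm Z‖ ≥
      Real.sqrt (Real.cos (θ + 2 * Real.arcsin δ)) *
        ∑ j, ‖Z 0 j‖ *
          ‖perm (Z.submatrix Fin.succ j.succAbove)‖ := by
  set P : Fin (n + 1) → ℂ := fun j => perm (Z.submatrix Fin.succ j.succAbove)
  have hZ0 : ∀ j, Z 0 j ≠ 0 := fun j =>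
    Complex.ne_zero_of_norm_sub_one_lt ((hZ 0 j).trans_lt hδ1)
  have hZ_angle : ∀ j, angle (Z 0 j) 1 ≤ arcsin δ := fun j => by
    rw [Complex.angle_one_right (hZ0 j)]
    exact Complex.abs_arg_le_arcsin_of_norm_sub_one_le hδ1 (hZ 0 j)
  have hangle : Pairwise fun j k => angle (Z 0 j * P j) (Z 0 k * P k) ≤ θ + 2 * arcsin δ := by
    intro j k hjk
    obtain ⟨m, hm⟩ := Fin.exists_swap_succAbove_eq hjk
    -- `Zⱼ` with its column `k` replaced by column `j`: a column permutation of `Zₖ`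
    obtain ⟨hPj, hPk, hPjk⟩ := Hangle (Z.submatrix Fin.succ j.succAbove)
      (Z.submatrix Fin.succ (swap j k ∘ j.succAbove)) (fun _ _ => hZ _ _)
      (fun _ _ => hZ _ _) ⟨m, fun l hl i => by simp [hm l hl]⟩
    rw [perm_submatrix_swap_comp_succAbove] at hPk hPjk
    calc angle (Z 0 j * P j) (Z 0 k * P k) ≤ angle (Z 0 j) (Z 0 k) + angle (P j) (P k) :=
          Complex.angle_mul_mul_le_angle_add_angle (hZ0 j) hPk
      _ ≤ angle (Z 0 j) 1 + angle 1 (Z 0 k) + θ := by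
          gcongr
          · exact angle_le_angle_add_angle _ _ _
          · rwa [Complex.angle_eq_abs_arg hPj hPk]
      _ ≤ θ + 2 * arcsin δ := by
          rw [angle_comm 1]
          linarith [hZ_angle j, hZ_angle k]
  rw [ge_iff_le, perm_succ_row_zero Z]
  simpa only [norm_mul] using sqrt_cos_mul_sum_norm_le_norm_sum (by linarith [pi_pos]) hangle

theorem perm_lower_bound_of_angle_hypothesis (n : ℕ) (δ θ : ℝ)
    (hδ : 0 < δ) (hδ1 : δ < 1) (hθ0 : 0 ≤ θ)
    (hθ : θ < Real.pi / 2 - 2 * Real.arcsin δ)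
    (Hangle : ∀ A B : Matrix (Fin n) (Fin n) ℂ,
      (∀ i j, ‖A i j - 1‖ ≤ δ) →
      (∀ i j, ‖B i j - 1‖ ≤ δ) →
      (∃ j₀ : Fin n, ∀ j, j ≠ j₀ → ∀ i, A i j = B i j) →
        perm A ≠ 0 ∧ perm B ≠ 0 ∧ |Complex.arg (perm A / perm B)| ≤ θ)
    (Hnz : ∀ W : Matrix (Fin n) (Fin n) ℂ,
      (∀ i j, ‖W i j - 1‖ ≤ δ) → perm W ≠ 0)
    (Z : Matrix (Fin (n + 1)) (Fin (n + 1)) ℂ)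
    (hZ : ∀ i j, ‖Z i j - 1‖ ≤ δ) :
    ‖perm Z‖ ≥
      Real.sqrt (Real.cos (θ + 2 * Real.arcsin δ)) *
        ∑ j, ‖Z 0 j‖ *
          ‖perm (Z.submatrix Fin.succ j.succAbove)‖ :=
  perm_lower_bound_of_angle_hypothesis_general n δ θ hδ1 hθ Hangle Z hZ
end

section
/- For non-zero complex numbers w_1, ..., w_n such that the angle between any two of them is at most α, where 0 ≤ α < π/2, one has |w_1 + ... + w_n| ≥ sqrt(cos α) · (|w_1| + ... + |w_n|). In particular w_1 + ... + w_n ≠ 0. -/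
/-!
Expanding `‖∑ wᵢ‖²` gives `∑ᵢ ∑ⱼ Re (wᵢ w̄ⱼ)`, and each term is `‖wᵢ‖‖wⱼ‖ cos (arg (wᵢ / wⱼ))
≥ cos α ‖wᵢ‖‖wⱼ‖`; hence `‖∑ wᵢ‖² ≥ cos α (∑ ‖wᵢ‖)²`. Since `cos α > 0`, the sum is nonzero.
-/

open Complex ComplexConjugate Finset RealInnerProductSpace

section InnerProductSpace

variable {E ι : Type*} [NormedAddCommGroup E] [InnerProductSpace ℝ E]

theorem mul_sq_sum_norm_le_sq_norm_sum (s : Finset ι) (v : ι → E) (c : ℝ)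
    (h : ∀ i ∈ s, ∀ j ∈ s, c * (‖v i‖ * ‖v j‖) ≤ ⟪v i, v j⟫) :
    c * (∑ i ∈ s, ‖v i‖) ^ 2 ≤ ‖∑ i ∈ s, v i‖ ^ 2 := by
  rw [← real_inner_self_eq_norm_sq, sum_inner, sq, sum_mul_sum, mul_sum]
  refine sum_le_sum fun i hi => ?_
  rw [inner_sum, mul_sum]
  exact sum_le_sum fun j hj => h i hi j hj

theorem sqrt_mul_sum_norm_le_norm_sum (s : Finset ι) (v : ι → E) {c : ℝ} (hc : 0 ≤ c)
    (h : ∀ i ∈ s, ∀ j ∈ s, c * (‖v i‖ * ‖v j‖) ≤ ⟪v i, v j⟫) :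
    √c * ∑ i ∈ s, ‖v i‖ ≤ ‖∑ i ∈ s, v i‖ := by
  refine le_of_sq_le_sq ?_ (norm_nonneg _)
  rw [mul_pow, Real.sq_sqrt hc]
  exact mul_sq_sum_norm_le_sq_norm_sum s v c h

end InnerProductSpace

namespace Complex

theorem cos_mul_norm_le_re_of_abs_arg_le {z : ℂ} {α : ℝ} (hαπ : α ≤ Real.pi)
    (h : |arg z| ≤ α) : Real.cos α * ‖z‖ ≤ z.re := by
  have hcos : Real.cos α ≤ Real.cos (arg z) := by
    rw [← Real.cos_abs (arg z)]
    exact Real.cos_le_cos_of_nonneg_of_le_pi (abs_nonneg _) hαπ h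
  rw [← norm_mul_cos_arg, mul_comm]
  exact mul_le_mul_of_nonneg_left hcos (norm_nonneg z)

theorem cos_mul_norm_mul_norm_le_re_mul_conj_of_abs_arg_div_le {w z : ℂ} {α : ℝ}
    (hαπ : α ≤ Real.pi) (h : |arg (w / z)| ≤ α) :
    Real.cos α * (‖w‖ * ‖z‖) ≤ (w * conj z).re := by
  rcases eq_or_ne z 0 with rfl | hz
  · simp
  have hmul : w * conj z = (normSq z : ℝ) * (w / z) := by
    rw [← mul_conj z]
    field_simp
  have harg : arg (w * conj z) = arg (w / z) := by
    rw [hmul, arg_real_mul _ (normSq_pos.mpr hz)]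
  have := cos_mul_norm_le_re_of_abs_arg_le hαπ (harg ▸ h)
  rwa [norm_mul, RCLike.norm_conj] at this

end Complex

theorem abs_sum_lower_bound_of_angle_le (n : ℕ) (hn : 0 < n)
    (w : Fin n → ℂ) (hw : ∀ i, w i ≠ 0) (α : ℝ)
    (hα0 : 0 ≤ α) (hα : α < Real.pi / 2)
    (hangle : ∀ i j, |Complex.arg (w i / w j)| ≤ α) :
    ‖∑ i, w i‖ ≥ Real.sqrt (Real.cos α) * ∑ i, ‖w i‖ ∧
      (∑ i, w i) ≠ 0 := by
  have hcos : 0 < Real.cos α := Real.cos_pos_of_mem_Ioo ⟨by linarith [Real.pi_pos], hα⟩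
  have hbound : √(Real.cos α) * ∑ i, ‖w i‖ ≤ ‖∑ i, w i‖ := by
    refine sqrt_mul_sum_norm_le_norm_sum _ w hcos.le fun i _ j _ => ?_
    rw [Complex.inner, mul_comm ‖w i‖]
    exact cos_mul_norm_mul_norm_le_re_mul_conj_of_abs_arg_div_le (by linarith) (hangle j i)
  have hsum_pos : 0 < ∑ i, ‖w i‖ :=
    sum_pos (fun i _ => norm_pos_iff.mpr (hw i)) ⟨⟨0, hn⟩, mem_univ _⟩
  refine ⟨hbound, fun h0 => ?_⟩
  have : 0 < √(Real.cos α) * ∑ i, ‖w i‖ := mul_pos (Real.sqrt_pos.mpr hcos) hsum_pos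
  rw [h0, norm_zero] at hbound
  linarith
end
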